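/- arXiv:1803.11134 — 2 statements merged into one kernel-verified Lean document; each statement's English description precedes it below -/
import Mathlib

section
/- Let G = (V,E) be a graph. Then M_{v,w} = W_{v,w} for all v, w ∈ V with v ≠ w. -/
/-- `M` is a module of the graph `G`: a nonempty vertex set such that every vertex
outside `M` is adjacent either to all of `M` or to none of `M`. -/
def IsModule {V : Type*} (G : SimpleGraph V) (M : Set V) : Prop :=
  M.Nonempty ∧ ∀ v ∉ M, ∀ w ∈ M, ∀ w' ∈ M, (G.Adj v w ↔ G.Adj v w')

/-- `M_{v,w}`: the intersection of all modules of `G` containing both `v` and `w`. -/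
def spanModule {V : Type*} (G : SimpleGraph V) (v w : V) : Set V :=
  ⋂₀ {M : Set V | IsModule G M ∧ v ∈ M ∧ w ∈ M}

/-- Two edges `e`, `e'` of `G` form a wedge: there are three distinct vertices `u`, `v`, `w`
with `e = {u,v}`, `e' = {u,w}`, and `{v,w}` not an edge. -/
def FormWedge {V : Type*} (G : SimpleGraph V) (e e' : Sym2 V) : Prop :=
  ∃ u v w : V, u ≠ v ∧ u ≠ w ∧ v ≠ w ∧ e = s(u, v) ∧ e' = s(u, w) ∧
    e ∈ G.edgeSet ∧ e' ∈ G.edgeSet ∧ ¬ G.Adj v w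

/-- Wedge connectivity: a sequence of edges in which consecutive edges form a wedge. -/
def WedgeConnected {V : Type*} (G : SimpleGraph V) : Sym2 V → Sym2 V → Prop :=
  Relation.ReflTransGen (FormWedge G)

open Classical in
/-- The wedge class of `{v,w}`: the edge class of `G` containing `{v,w}` if `{v,w}` is an
edge of `G`, and otherwise the edge class of the complement graph `Gᶜ` containing `{v,w}`. -/
noncomputable def wedgeClass {V : Type*} (G : SimpleGraph V) (v w : V) : Set (Sym2 V) :=
  if G.Adj v w then {e | WedgeConnected G s(v, w) e} else {e | WedgeConnected Gᶜ s(v, w) e}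

/-- `W_{v,w}`: the union of all (2-element) sets in the wedge class of `{v,w}`. -/
noncomputable def Wset {V : Type*} (G : SimpleGraph V) (v w : V) : Set V :=
  {x | ∃ e ∈ wedgeClass G v w, x ∈ e}

lemma wedge_edge {V : Type*} {G : SimpleGraph V} {v w : V} (hvw : G.Adj v w)
    {e : Sym2 V} (he : WedgeConnected G s(v, w) e) : e ∈ G.edgeSet := by
  induction he with
  | refl => exact hvw
  | tail _ h _ =>
    obtain ⟨u, a, b, _, _, _, _, rfl, _, hE', _⟩ := h
    exact hE'

lemma mem_module_of_wedgeConnected {V : Type*} {G : SimpleGraph V} {M : Set V}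
    (hM : IsModule G M) {v w : V} (hv : v ∈ M) (hw : w ∈ M) {e : Sym2 V}
    (he : WedgeConnected G s(v, w) e) : ∀ x ∈ e, x ∈ M := by
  induction he with
  | refl =>
    intro x hx
    rcases Sym2.mem_iff.mp hx with rfl | rfl
    · exact hv
    · exact hw
  | tail _ h ih =>
    obtain ⟨u, a, b, hua, hub, hab, rfl, rfl, hE, hE', hnadj⟩ := h
    have hu : u ∈ M := ih u (by simp)
    have ha : a ∈ M := ih a (by simp)
    intro x hx
    rcases Sym2.mem_iff.mp hx with rfl | rfl
    · exact hu
    · by_contra hb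
      have hadj : G.Adj x u := ((SimpleGraph.mem_edgeSet _).mp hE').symm
      have := (hM.2 x hb u hu a ha).mp hadj
      exact hnadj this.symm

lemma mem_Wset_iff {V : Type*} {G : SimpleGraph V} {v w : V} (hvw : G.Adj v w) (x : V) :
    x ∈ Wset G v w ↔ ∃ e, WedgeConnected G s(v, w) e ∧ x ∈ e := by
  simp [Wset, wedgeClass, if_pos hvw]

lemma adj_x_pair {V : Type*} {G : SimpleGraph V} {v w x p q : V} (hvw : G.Adj v w)
    (hx : x ∉ Wset G v w) (he : WedgeConnected G s(v, w) s(p, q)) :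
    G.Adj x p ↔ G.Adj x q := by
  have hpq : G.Adj p q := (SimpleGraph.mem_edgeSet _).mp (wedge_edge hvw he)
  have key : ∀ a b : V, s(a, b) = s(p, q) → G.Adj x a → ¬ G.Adj x b → False := by
    intro a b hab hxa hxb
    have hAB : G.Adj a b := by
      have := (SimpleGraph.mem_edgeSet _).mp (hab ▸ ((SimpleGraph.mem_edgeSet _).mpr hpq))
      exact this
    by_cases hbx : b = x
    · exact hx ((mem_Wset_iff hvw x).mpr ⟨s(p, q), he, by rw [← hab, hbx]; simp⟩)
    · have hwedge : FormWedge G s(a, b) s(a, x) := by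
        refine ⟨a, b, x, hAB.ne, fun h => (h ▸ hxa).ne rfl, fun h => hbx h, rfl, rfl, ?_, ?_, ?_⟩
        · exact (SimpleGraph.mem_edgeSet _).mpr hAB
        · exact (SimpleGraph.mem_edgeSet _).mpr hxa.symm
        · exact fun h => hxb h.symm
      have : WedgeConnected G s(v, w) s(a, x) :=
        Relation.ReflTransGen.tail (hab ▸ he) hwedge
      exact hx ((mem_Wset_iff hvw x).mpr ⟨s(a, x), this, by simp⟩)
  constructor
  · intro h1
    by_contra h2
    exact key p q rfl h1 h2
  · intro h1
    by_contra h2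
    exact key q p (Sym2.eq_swap) h1 h2

lemma adj_x_const {V : Type*} {G : SimpleGraph V} {v w x : V} (hvw : G.Adj v w)
    (hx : x ∉ Wset G v w) {e : Sym2 V} (he : WedgeConnected G s(v, w) e) :
    ∀ y ∈ e, (G.Adj x y ↔ G.Adj x v) := by
  induction he with
  | refl =>
    intro y hy
    rcases Sym2.mem_iff.mp hy with rfl | rfl
    · exact Iff.rfl
    · exact (adj_x_pair hvw hx Relation.ReflTransGen.refl).symm
  | tail hb h ih =>
    obtain ⟨u, a, b, hua, hub, hab, rfl, rfl, hE, hE', hnadj⟩ := h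
    have hc : WedgeConnected G s(v, w) s(u, b) :=
      Relation.ReflTransGen.tail hb ⟨u, a, b, hua, hub, hab, rfl, rfl, hE, hE', hnadj⟩
    have hu := ih u (by simp)
    have hub' : G.Adj x u ↔ G.Adj x b := adj_x_pair hvw hx hc
    intro y hy
    rcases Sym2.mem_iff.mp hy with rfl | rfl
    · exact hu
    · exact hub'.symm.trans hu

lemma isModule_Wset {V : Type*} {G : SimpleGraph V} {v w : V} (hvw : G.Adj v w) :
    IsModule G (Wset G v w) := by
  constructor
  · exact ⟨v, (mem_Wset_iff hvw v).mpr ⟨s(v, w), Relation.ReflTransGen.refl, by simp⟩⟩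
  · intro x hx a ha b hb
    obtain ⟨ea, hea, hae⟩ := (mem_Wset_iff hvw a).mp ha
    obtain ⟨eb, heb, hbe⟩ := (mem_Wset_iff hvw b).mp hb
    exact (adj_x_const hvw hx hea a hae).trans (adj_x_const hvw hx heb b hbe).symm

lemma isModule_compl_of {V : Type*} {G : SimpleGraph V} {M : Set V}
    (h : IsModule G M) : IsModule Gᶜ M := by
  refine ⟨h.1, fun a ha b hb c hc => ?_⟩
  have hab : a ≠ b := fun hh => ha (hh ▸ hb)
  have hac : a ≠ c := fun hh => ha (hh ▸ hc)
  have := h.2 a ha b hb c hc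
  simp [SimpleGraph.compl_adj, hab, hac]
  tauto

lemma isModule_compl_iff {V : Type*} (G : SimpleGraph V) (M : Set V) :
    IsModule Gᶜ M ↔ IsModule G M := by
  constructor
  · intro h
    have := isModule_compl_of h
    rwa [compl_compl] at this
  · exact isModule_compl_of

lemma spanModule_eq_Wset_of_adj {V : Type*} {G : SimpleGraph V} {v w : V}
    (hvw : G.Adj v w) : spanModule G v w = Wset G v w := by
  apply le_antisymm
  · apply Set.sInter_subset_of_mem
    refine ⟨isModule_Wset hvw, ?_, ?_⟩
    · exact (mem_Wset_iff hvw v).mpr ⟨s(v, w), Relation.ReflTransGen.refl, by simp⟩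
    · exact (mem_Wset_iff hvw w).mpr ⟨s(v, w), Relation.ReflTransGen.refl, by simp⟩
  · intro x hx
    rw [mem_Wset_iff hvw] at hx
    obtain ⟨e, he, hxe⟩ := hx
    intro M hM
    exact mem_module_of_wedgeConnected hM.1 hM.2.1 hM.2.2 he x hxe

/-- For all distinct vertices `v`, `w` it holds that `M_{v,w} = W_{v,w}`. -/
theorem spanModule_eq_Wset {V : Type*} [Fintype V] [Nonempty V]
    (G : SimpleGraph V) (v w : V) (hvw : v ≠ w) :
    spanModule G v w = Wset G v w := by
  by_cases h : G.Adj v w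
  · exact spanModule_eq_Wset_of_adj h
  · have hc : Gᶜ.Adj v w := ⟨hvw, h⟩
    have hmain := spanModule_eq_Wset_of_adj hc
    have h1 : spanModule G v w = spanModule Gᶜ v w := by
      unfold spanModule
      ext M
      simp [isModule_compl_iff]
    have h2 : Wset Gᶜ v w = Wset G v w := by
      simp [Wset, wedgeClass, if_pos hc, if_neg h, compl_compl]
    rw [h1, hmain, h2]
end

section
/- Let G = (V,E) be a graph with |V| > 1 such that both G and its complement graph Ḡ are connected. Let G_∼ be the graph whose vertices are the maximal proper modules of G, in which two distinct maximal proper modules M and M' are adjacent if and only if some vertex of M is adjacent in G to some vertex of M'. Then G_∼ is a prime graph. -/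
/-- A maximal proper module of `G`: a module `M ⊊ V` that is not properly contained
in any other proper module. -/
def IsMaxProperModule {V : Type*} (G : SimpleGraph V) (M : Set V) : Prop :=
  IsModule G M ∧ M ≠ Set.univ ∧
    ∀ M' : Set V, IsModule G M' → M' ≠ Set.univ → M ⊆ M' → M = M'

/-- A graph is prime if all of its modules are trivial, i.e. singletons or the
whole vertex set. -/
def IsPrime {V : Type*} (G : SimpleGraph V) : Prop :=
  ∀ M : Set V, IsModule G M → (∃ x, M = {x}) ∨ M = Set.univ

/-- The modular contraction `G_∼`: its vertices are the maximal proper modules of `G`,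
two distinct such modules being adjacent iff some vertex of one is adjacent in `G`
to some vertex of the other. -/
def modularContraction {V : Type*} (G : SimpleGraph V) :
    SimpleGraph {M : Set V // IsMaxProperModule G M} where
  Adj M M' := M ≠ M' ∧ ∃ u ∈ M.1, ∃ v ∈ M'.1, G.Adj u v
  symm := by
    constructor
    rintro M M' ⟨hne, u, hu, v, hv, huv⟩
    exact ⟨hne.symm, v, hv, u, hu, huv.symm⟩
  loopless := by
    constructor
    rintro M ⟨hne, -⟩
    exact hne rfl

open Set

namespace SimpleGraph

variable {V : Type*} {G : SimpleGraph V}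

theorem Preconnected.exists_adj_mem_notMem (hG : G.Preconnected) {S : Set V} {a b : V}
    (ha : a ∈ S) (hb : b ∉ S) : ∃ x ∈ S, ∃ y ∉ S, G.Adj x y := by
  obtain ⟨p⟩ := hG a b
  obtain ⟨d, -, hd₁, hd₂⟩ := p.exists_boundary_dart S ha hb
  exact ⟨_, hd₁, _, hd₂, d.adj⟩

end SimpleGraph

section Modules

variable {V : Type*} {G : SimpleGraph V} {M N : Set V}

theorem isModule_singleton (G : SimpleGraph V) (v : V) : IsModule G {v} :=
  ⟨singleton_nonempty v, by rintro u - w rfl w' rfl; rfl⟩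

theorem IsModule.adj_iff_adj_of_disjoint (hM : IsModule G M) (hN : IsModule G N)
    (hMN : Disjoint M N) {u u' w w' : V} (hu : u ∈ M) (hu' : u' ∈ M) (hw : w ∈ N)
    (hw' : w' ∈ N) : G.Adj u w ↔ G.Adj u' w' :=
  calc G.Adj u w ↔ G.Adj u w' := hN.2 u (hMN.notMem_of_mem_left hu) w hw w' hw'
    _ ↔ G.Adj w' u := G.adj_comm _ _
    _ ↔ G.Adj w' u' := hM.2 w' (hMN.notMem_of_mem_right hw') u hu u' hu'
    _ ↔ G.Adj u' w' := G.adj_comm _ _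

theorem IsModule.union (hM : IsModule G M) (hN : IsModule G N) (hMN : (M ∩ N).Nonempty) :
    IsModule G (M ∪ N) := by
  obtain ⟨v, hvM, hvN⟩ := hMN
  have adj_iff_adj : ∀ u ∉ M ∪ N, ∀ x ∈ M ∪ N, (G.Adj u x ↔ G.Adj u v) := by
    rintro u hu x (hx | hx)
    · exact hM.2 u (fun h => hu (Or.inl h)) x hx v hvM
    · exact hN.2 u (fun h => hu (Or.inr h)) x hx v hvN
  exact ⟨⟨v, Or.inl hvM⟩, fun u hu w hw w' hw' => by
    rw [adj_iff_adj u hu w hw, adj_iff_adj u hu w' hw']⟩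

theorem IsModule.union_ne_univ (hG : G.Preconnected) (hGc : Gᶜ.Preconnected)
    (hM : IsModule G M) (hN : IsModule G N) (hMu : M ≠ univ) (hNu : N ≠ univ) :
    M ∪ N ≠ univ := by
  intro hMN
  obtain ⟨a, haN⟩ := (ne_univ_iff_exists_notMem N).1 hNu
  obtain ⟨b, hbM⟩ := (ne_univ_iff_exists_notMem M).1 hMu
  have mem_of_notMem : ∀ {x}, x ∉ N → x ∈ M := fun {x} hx =>
    ((eq_univ_iff_forall.1 hMN x).resolve_right hx)
  have hbN : b ∈ N := (eq_univ_iff_forall.1 hMN b).resolve_left hbM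
  -- `Nᶜ ⊆ M` and `Mᶜ ⊆ N`, so both modules make the adjacency between `Nᶜ` and `N` constant.
  have adj_iff_adj : ∀ x ∉ N, ∀ y ∈ N, (G.Adj x y ↔ G.Adj a b) := fun x hx y hy =>
    calc G.Adj x y ↔ G.Adj x b := hN.2 x hx y hy b hbN
      _ ↔ G.Adj b x := G.adj_comm _ _
      _ ↔ G.Adj b a := hM.2 b hbM x (mem_of_notMem hx) a (mem_of_notMem haN)
      _ ↔ G.Adj a b := G.adj_comm _ _
  obtain ⟨x, hx, y, hy, hxy⟩ := hG.exists_adj_mem_notMem (S := Nᶜ) haN (not_not.2 hbN)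
  obtain ⟨x', hx', y', hy', hxy'⟩ := hGc.exists_adj_mem_notMem (S := Nᶜ) haN (not_not.2 hbN)
  exact hxy'.2 ((adj_iff_adj x' hx' y' (not_not.1 hy')).2
    ((adj_iff_adj x hx y (not_not.1 hy)).1 hxy))

theorem exists_isMaxProperModule_superset [Finite V] (hM : IsModule G M) (hMu : M ≠ univ) :
    ∃ N, IsMaxProperModule G N ∧ M ⊆ N := by
  obtain ⟨N, hMN, ⟨hN, hNu⟩, hmax⟩ :=
    Finite.exists_le_maximal (p := fun N : Set V => IsModule G N ∧ N ≠ univ) ⟨hM, hMu⟩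
  exact ⟨N, ⟨hN, hNu, fun N' hN' hN'u hNN' => hNN'.antisymm (hmax ⟨hN', hN'u⟩ hNN')⟩, hMN⟩

theorem exists_isMaxProperModule_mem [Finite V] [Nontrivial V] (G : SimpleGraph V) (v : V) :
    ∃ M, IsMaxProperModule G M ∧ v ∈ M := by
  obtain ⟨M, hM, hvM⟩ :=
    exists_isMaxProperModule_superset (isModule_singleton G v) (singleton_ne_univ v)
  exact ⟨M, hM, singleton_subset_iff.1 hvM⟩

theorem IsMaxProperModule.disjoint (hG : G.Preconnected) (hGc : Gᶜ.Preconnected)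
    (hM : IsMaxProperModule G M) (hN : IsMaxProperModule G N) (hMN : M ≠ N) :
    Disjoint M N := by
  refine disjoint_iff_inter_eq_empty.2 (not_nonempty_iff_eq_empty.1 fun hint => hMN ?_)
  have hU := hM.1.union hN.1 hint
  have hUu := hM.1.union_ne_univ hG hGc hN.1 hM.2.1 hN.2.1
  exact (hM.2.2 _ hU hUu subset_union_left).trans (hN.2.2 _ hU hUu subset_union_right).symm

end Modules

section Contraction

variable {V : Type*} {G : SimpleGraph V}

theorem modularContraction_adj_iff (hG : G.Preconnected) (hGc : Gᶜ.Preconnected)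
    {M N : {M : Set V // IsMaxProperModule G M}} (hMN : M ≠ N) {u w : V} (hu : u ∈ M.1)
    (hw : w ∈ N.1) : (modularContraction G).Adj M N ↔ G.Adj u w := by
  have hd := M.2.disjoint hG hGc N.2 (Subtype.coe_ne_coe.2 hMN)
  refine ⟨fun ⟨_, u', hu', w', hw', h⟩ => ?_, fun h => ⟨hMN, u, hu, w, hw, h⟩⟩
  exact (M.2.1.adj_iff_adj_of_disjoint N.2.1 hd hu' hu hw' hw).1 h

theorem IsModule.biUnion_of_modularContraction [Finite V] [Nontrivial V]
    (hG : G.Preconnected) (hGc : Gᶜ.Preconnected)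
    {𝓜 : Set {M : Set V // IsMaxProperModule G M}} (h𝓜 : IsModule (modularContraction G) 𝓜) :
    IsModule G (⋃ M ∈ 𝓜, M.1) := by
  obtain ⟨M₀, hM₀⟩ := h𝓜.1
  refine ⟨M₀.2.1.1.mono (subset_biUnion_of_mem hM₀), fun u hu w hw w' hw' => ?_⟩
  obtain ⟨N, hN, huN⟩ := exists_isMaxProperModule_mem G u
  have hN𝓜 : ⟨N, hN⟩ ∉ 𝓜 := fun h => hu (mem_biUnion h huN)
  obtain ⟨M, hM, hwM⟩ := mem_iUnion₂.1 hw
  obtain ⟨M', hM', hw'M'⟩ := mem_iUnion₂.1 hw'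
  rw [← modularContraction_adj_iff hG hGc (ne_of_mem_of_not_mem hM hN𝓜).symm huN hwM,
    ← modularContraction_adj_iff hG hGc (ne_of_mem_of_not_mem hM' hN𝓜).symm huN hw'M']
  exact h𝓜.2 _ hN𝓜 M hM M' hM'

theorem biUnion_ne_univ_of_ne_univ (hG : G.Preconnected) (hGc : Gᶜ.Preconnected)
    {𝓜 : Set {M : Set V // IsMaxProperModule G M}} (h𝓜 : 𝓜 ≠ univ) :
    (⋃ M ∈ 𝓜, M.1) ≠ univ := by
  obtain ⟨P, hP⟩ := (ne_univ_iff_exists_notMem 𝓜).1 h𝓜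
  obtain ⟨x, hx⟩ := P.2.1.1
  refine (ne_univ_iff_exists_notMem _).2 ⟨x, fun hxU => ?_⟩
  obtain ⟨M, hM, hxM⟩ := mem_iUnion₂.1 hxU
  have hMP : M.1 ≠ P.1 := Subtype.coe_ne_coe.2 (ne_of_mem_of_not_mem hM hP)
  exact (M.2.disjoint hG hGc P.2 hMP).notMem_of_mem_left hxM hx

end Contraction

/-- (Gallai) If `G` has more than one vertex and both `G` and its complement are
connected, then the modular contraction `G_∼` is a prime graph. -/
theorem modularContraction_isPrime {V : Type*} [Fintype V]
    (G : SimpleGraph V) (hcard : 1 < Fintype.card V)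
    (hG : G.Connected) (hGc : Gᶜ.Connected) :
    IsPrime (modularContraction G) := by
  have : Nontrivial V := Fintype.one_lt_card_iff_nontrivial.1 hcard
  intro 𝓜 h𝓜
  by_cases h𝓜u : 𝓜 = univ
  · exact Or.inr h𝓜u
  obtain ⟨M₀, hM₀⟩ := h𝓜.1
  have hW := h𝓜.biUnion_of_modularContraction hG.preconnected hGc.preconnected
  have hWu := biUnion_ne_univ_of_ne_univ hG.preconnected hGc.preconnected h𝓜u
  have eq_biUnion : ∀ M ∈ 𝓜, M.1 = ⋃ M ∈ 𝓜, M.1 := fun M hM =>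
    M.2.2.2 _ hW hWu (subset_biUnion_of_mem hM)
  refine Or.inl ⟨M₀, eq_singleton_iff_unique_mem.2 ⟨hM₀, fun M hM => ?_⟩⟩
  exact Subtype.ext ((eq_biUnion M hM).trans (eq_biUnion M₀ hM₀).symm)
end
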